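/- Let G be an exactly k-edge-connected multigraph and let S = ⟨V₁, V₂⟩ be a non-trivial minimum edge cut of G, say S = {(uᵢ,vᵢ) ∈ V₁ × V₂ : 1 ≤ i ≤ k}. Let G₁ be the multigraph on vertex set V₁ ∪ {x₁} whose edges are the edges of G with both endpoints in V₁ together with k new edges (x₁,uᵢ) for 1 ≤ i ≤ k, and let G₂ be the multigraph on vertex set V₂ ∪ {x₂} whose edges are the edges of G with both endpoints in V₂ together with k new edges (x₂,vᵢ) for 1 ≤ i ≤ k. Then both G₁ and G₂ are exactly k-edge-connected. -/

import Mathlib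

/-- A multigraph on vertex type `V` with edge type `E`: each edge is assigned
an unordered pair of endpoints (parallel edges and loops are allowed). -/
structure Multigraph (V : Type) (E : Type) where
  ends : E → Sym2 V

namespace Multigraph

variable {V E : Type}

/-- Walks in a multigraph, recorded as the sequence of traversed edges. -/
inductive Walk (G : Multigraph V E) : V → V → Type
  | nil (v : V) : Walk G v v
  | cons {u v w : V} (e : E) (he : G.ends e = s(u, v)) (p : Walk G v w) : Walk G u w

/-- The list of edges traversed by a walk. -/
def Walk.edges {G : Multigraph V E} : ∀ {u v : V}, G.Walk u v → List E
  | _, _, .nil _ => []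
  | _, _, .cons e _ p => e :: p.edges

/-- The list of vertices visited by a walk, in order. -/
def Walk.support {G : Multigraph V E} : ∀ {u v : V}, G.Walk u v → List V
  | _, _, .nil v => [v]
  | u, _, .cons _ _ p => u :: p.support

/-- A path is a walk visiting no vertex twice. -/
def Walk.IsPath {G : Multigraph V E} {u v : V} (p : G.Walk u v) : Prop :=
  p.support.Nodup

/-- There exist `k` pairwise edge-disjoint `u`–`v` paths in `G`. -/
def HasEdgeDisjointPaths (G : Multigraph V E) (k : ℕ) (u v : V) : Prop :=
  ∃ f : Fin k → G.Walk u v, (∀ i, (f i).IsPath) ∧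
    ∀ i j, i ≠ j → ∀ e, e ∈ (f i).edges → e ∉ (f j).edges

/-- `G` is `k`-edge-connected: it has more than one vertex and any two distinct
vertices are joined by at least `k` pairwise edge-disjoint paths. -/
def EdgeConnected (G : Multigraph V E) (k : ℕ) : Prop :=
  (∃ u v : V, u ≠ v) ∧ ∀ u v : V, u ≠ v → G.HasEdgeDisjointPaths k u v

/-- Deletion of the edge `e₀`. -/
def deleteEdge (G : Multigraph V E) (e₀ : E) : Multigraph V {e : E // e ≠ e₀} :=
  ⟨fun e => G.ends e.1⟩

/-- `G` is an edge-minimal `k`-edge-connected multigraph. -/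
def EdgeMinimal (G : Multigraph V E) (k : ℕ) : Prop :=
  G.EdgeConnected k ∧ ∀ e₀ : E, ¬ (G.deleteEdge e₀).EdgeConnected k

/-- The unordered pair of endpoints of an edge, as a multiset. -/
def _root_.Sym2.toMset {α : Type*} : Sym2 α → Multiset α :=
  Sym2.lift ⟨fun a b => {a, b}, fun a b => Multiset.cons_swap a b 0⟩

open Classical in
/-- The degree of a vertex: the number of edge-endpoints at `v`, counting
parallel edges with multiplicity (and loops twice). -/
noncomputable def degree (G : Multigraph V E) [Fintype E] (v : V) : ℕ :=
  ∑ e : E, Multiset.count v (G.ends e).toMset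

/-- The relation `R^k`: `v₁ R^k v₂` iff `v₁ = v₂` or there are `k` pairwise
edge-disjoint paths between `v₁` and `v₂`. -/
def Rel (G : Multigraph V E) (k : ℕ) (v₁ v₂ : V) : Prop :=
  v₁ = v₂ ∨ G.HasEdgeDisjointPaths k v₁ v₂

/-- A multigraph has more than one vertex and exactly `k` pairwise edge-disjoint
paths (as a maximum) between any two distinct vertices. -/
def ExactlyEdgeConnected (G : Multigraph V E) (k : ℕ) : Prop :=
  (∃ u v : V, u ≠ v) ∧ ∀ u v : V, u ≠ v →
    G.HasEdgeDisjointPaths k u v ∧ ¬ G.HasEdgeDisjointPaths (k + 1) u v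

/-- The edge cut `⟨A, Aᶜ⟩`: all edges with one endpoint in `A` and the other
outside `A`. -/
def cutEdges (G : Multigraph V E) (A : Set V) : Set E :=
  {e : E | ∃ a b : V, G.ends e = s(a, b) ∧ a ∈ A ∧ b ∉ A}

/-- `⟨A, Aᶜ⟩` is a minimum edge cut of `G`: both sides are nonempty and no other
edge cut has fewer edges. -/
def IsMinCut (G : Multigraph V E) (A : Set V) : Prop :=
  A.Nonempty ∧ Aᶜ.Nonempty ∧ ∀ B : Set V, B.Nonempty → Bᶜ.Nonempty →
    (G.cutEdges A).ncard ≤ (G.cutEdges B).ncard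

open Classical in
/-- Vertex splitting: the multigraph on `A ∪ {x₁}` (with `x₁ = Sum.inr ()` a
new vertex) whose edges are the edges of `G` with both endpoints in `A`,
together with `k` new edges joining `x₁` to the vertices `u i` (the endpoints
in `A` of the cut edges). -/
noncomputable def splitGraph (G : Multigraph V E) (A : Set V) {k : ℕ}
    (u : Fin k → V) :
    Multigraph (↥A ⊕ Unit) ({e : E // ∀ x ∈ G.ends e, x ∈ A} ⊕ Fin k) :=
  ⟨fun e => match e with
    | .inl e' => (G.ends e'.1).map
        (fun x => if h : x ∈ A then Sum.inl ⟨x, h⟩ else Sum.inr ())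
    | .inr i => s(if h : u i ∈ A then Sum.inl ⟨u i, h⟩ else Sum.inr (), Sum.inr ())⟩

end Multigraph

/-!
Vertex splitting is a contraction: `G.splitGraph A u` is `G` with `Aᶜ` collapsed to the new
vertex `Sum.inr ()`, the cut edges `f i` becoming the edges at that vertex. Its edge cuts are
therefore the cuts `⟨C, Cᶜ⟩` of `G` with `C ⊆ A` or `Aᶜ ⊆ C`, with the same sizes.

By the edge version of Menger's theorem (here via unit-capacity integral flows and augmenting
paths), a finite multigraph is exactly `k`-edge-connected iff every edge cut has at least `k`
edges and any two vertices are separated by a cut with at most `k` edges. The first property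
passes to the contraction at once. For the second, a cut `⟨B, Bᶜ⟩` with at most `k` edges
separating two vertices is uncrossed with the cut `⟨A, Aᶜ⟩`, which has `k` edges: unless
`Aᶜ ⊆ B`, submodularity gives `|∂(B ∩ A)| ≤ |∂B| + |∂A| - |∂(B ∪ A)| ≤ k`.
-/

namespace Multigraph

variable {V E : Type} {G : Multigraph V E}

section Cuts

lemma mem_cutEdges_iff {e : E} {B : Set V} {x y : V} (he : G.ends e = s(x, y)) :
    e ∈ G.cutEdges B ↔ x ∈ B ∧ y ∉ B ∨ y ∈ B ∧ x ∉ B := by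
  constructor
  · rintro ⟨p, q, hpq, hp, hq⟩
    rcases Sym2.eq_iff.1 (he.symm.trans hpq) with ⟨rfl, rfl⟩ | ⟨rfl, rfl⟩
    · exact .inl ⟨hp, hq⟩
    · exact .inr ⟨hp, hq⟩
  · rintro (⟨hx, hy⟩ | ⟨hy, hx⟩)
    · exact ⟨x, y, he, hx, hy⟩
    · exact ⟨y, x, he.trans Sym2.eq_swap, hy, hx⟩

lemma cutEdges_compl (B : Set V) : G.cutEdges Bᶜ = G.cutEdges B := by
  ext e
  obtain ⟨⟨x, y⟩, he⟩ := Sym2.mk_surjective (G.ends e)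
  rw [mem_cutEdges_iff he.symm, mem_cutEdges_iff he.symm, Set.mem_compl_iff, Set.mem_compl_iff]
  tauto

lemma ncard_cutEdges_eq_sum [Fintype E] (B : Set V) [DecidablePred (· ∈ G.cutEdges B)] :
    (G.cutEdges B).ncard = ∑ e, if e ∈ G.cutEdges B then 1 else 0 := by
  rw [Finset.sum_boole, Nat.cast_id, ← Set.ncard_coe_finset, Finset.coe_filter_univ,
    Set.ofPred_mem_eq]

lemma ncard_cutEdges_inter_add_ncard_cutEdges_union_le [Fintype E] (X Y : Set V) :
    (G.cutEdges (X ∩ Y)).ncard + (G.cutEdges (X ∪ Y)).ncard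
      ≤ (G.cutEdges X).ncard + (G.cutEdges Y).ncard := by
  classical
  simp only [ncard_cutEdges_eq_sum, ← Finset.sum_add_distrib]
  refine Finset.sum_le_sum fun e _ => ?_
  obtain ⟨⟨x, y⟩, he⟩ := Sym2.mk_surjective (G.ends e)
  simp only [mem_cutEdges_iff he.symm, Set.mem_inter_iff, Set.mem_union]
  by_cases x ∈ X <;> by_cases x ∈ Y <;> by_cases y ∈ X <;> by_cases y ∈ Y <;> simp [*]

end Cuts

namespace Walk

def darts : ∀ {u v : V}, G.Walk u v → List (E × V)
  | _, _, .nil _ => []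
  | u, _, .cons e _ p => (e, u) :: p.darts

lemma edges_eq_map_darts {u v : V} (p : G.Walk u v) : p.edges = p.darts.map Prod.fst := by
  induction p with
  | nil => rfl
  | cons e he q ih => simp [edges, darts, ih]

lemma start_mem_support {u v : V} (p : G.Walk u v) : u ∈ p.support := by
  cases p <;> exact List.mem_cons_self ..

lemma mem_support_of_mem_edges {u v : V} (p : G.Walk u v) {e : E} {x : V}
    (he : e ∈ p.edges) (hx : x ∈ G.ends e) : x ∈ p.support := by
  induction p with
  | nil => simp [edges] at he
  | cons e' he' q ih =>
    rcases List.mem_cons.1 he with rfl | he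
    · rcases Sym2.mem_iff.1 (he' ▸ hx) with rfl | rfl
      · exact List.mem_cons_self ..
      · exact List.mem_cons_of_mem _ q.start_mem_support
    · exact List.mem_cons_of_mem _ (ih he)

lemma IsPath.edges_nodup {u v : V} {p : G.Walk u v} (hp : p.IsPath) : p.edges.Nodup := by
  induction p with
  | nil => exact List.nodup_nil
  | cons e he q ih =>
    rw [IsPath, support, List.nodup_cons] at hp
    exact List.nodup_cons.2
      ⟨fun h => hp.1 (q.mem_support_of_mem_edges h (he ▸ Sym2.mem_mk_left _ _)), ih hp.2⟩

lemma exists_suffix {u v x : V} (p : G.Walk u v) (hx : x ∈ p.support) :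
    ∃ r : G.Walk x v, r.support.Sublist p.support ∧ r.darts.Sublist p.darts := by
  induction p with
  | nil =>
    obtain rfl := List.mem_singleton.1 hx
    exact ⟨.nil _, .refl _, .refl _⟩
  | cons e he q ih =>
    rcases List.mem_cons.1 hx with rfl | hx
    · exact ⟨.cons e he q, .refl _, .refl _⟩
    · obtain ⟨r, hrs, hrd⟩ := ih hx
      exact ⟨r, hrs.cons _, hrd.cons _⟩

lemma exists_mem_edges_mem_cutEdges {B : Set V} {u v : V} (p : G.Walk u v) (hu : u ∈ B)
    (hv : v ∉ B) : ∃ e ∈ p.edges, e ∈ G.cutEdges B := by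
  induction p with
  | nil => exact absurd hu hv
  | @cons u w _ e he q ih =>
    by_cases hw : w ∈ B
    · obtain ⟨e', he', hcut⟩ := ih hw hv
      exact ⟨e', List.mem_cons_of_mem _ he', hcut⟩
    · exact ⟨e, List.mem_cons_self .., u, w, he, hu, hw⟩

end Walk

def DartRel (G : Multigraph V E) (Q : E → V → Prop) (x y : V) : Prop :=
  ∃ e, G.ends e = s(x, y) ∧ Q e x

lemma exists_isPath_of_reflTransGen {Q : E → V → Prop} {a b : V}
    (h : Relation.ReflTransGen (G.DartRel Q) a b) :
    ∃ p : G.Walk a b, p.IsPath ∧ ∀ d ∈ p.darts, Q d.1 d.2 := by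
  induction h using Relation.ReflTransGen.head_induction_on with
  | refl => exact ⟨.nil b, List.nodup_singleton b, by simp [Walk.darts]⟩
  | @head x y hstep _ ih =>
    obtain ⟨e, he, hQ⟩ := hstep
    obtain ⟨q, hq, hqQ⟩ := ih
    by_cases hx : x ∈ q.support
    · obtain ⟨r, hrs, hrd⟩ := q.exists_suffix hx
      exact ⟨r, hrs.nodup hq, fun d hd => hqQ d (hrd.subset hd)⟩
    · refine ⟨.cons e he q, List.nodup_cons.2 ⟨hx, hq⟩, ?_⟩
      rintro d (_ | ⟨_, hd⟩)
      exacts [hQ, hqQ d hd]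

lemma exists_finset_closed_of_not_reflTransGen [Fintype V] {r : V → V → Prop} {a b : V}
    (h : ¬ Relation.ReflTransGen r a b) :
    ∃ R : Finset V, a ∈ R ∧ b ∉ R ∧ ∀ x y, r x y → x ∈ R → y ∈ R := by
  classical
  refine ⟨Finset.univ.filter (Relation.ReflTransGen r a), by simp [Relation.ReflTransGen.refl],
    by simpa, ?_⟩
  simp only [Finset.mem_filter, Finset.mem_univ, true_and]
  exact fun x y hxy hx => hx.tail hxy

lemma le_ncard_cutEdges_of_hasEdgeDisjointPaths [Finite E] {t : ℕ} {a b : V}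
    (h : G.HasEdgeDisjointPaths t a b) {B : Set V} (ha : a ∈ B) (hb : b ∉ B) :
    t ≤ (G.cutEdges B).ncard := by
  obtain ⟨p, -, hdisj⟩ := h
  choose g hgp hgcut using fun i => (p i).exists_mem_edges_mem_cutEdges ha hb
  have hg : Function.Injective g := fun i j hij => by
    by_contra hne
    exact hdisj i j hne (g i) (hgp i) (hij ▸ hgp j)
  calc t = (Set.range g).ncard := by rw [Set.ncard_range_of_injective hg, Nat.card_fin]
    _ ≤ (G.cutEdges B).ncard := Set.ncard_le_ncard (Set.range_subset_iff.2 hgcut)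

section Flow

variable [DecidableEq V]

def dipole (a b z : V) : ℤ := (if z = a then 1 else 0) - (if z = b then 1 else 0)

lemma sum_dipole {a b : V} {R : Finset V} (ha : a ∈ R) (hb : b ∉ R) :
    ∑ z ∈ R, dipole a b z = 1 := by
  simp [dipole, Finset.sum_sub_distrib, ha, hb]

/-- A flow `f : E → ℤ` is measured along the reference orientation `(G.ends e).out` of each
edge; `G.orient e x = ±1` is the sign of traversing `e` from its end `x`. -/
noncomputable def incidence (G : Multigraph V E) (e : E) : V → ℤ :=
  dipole (G.ends e).out.1 (G.ends e).out.2

noncomputable def orient (G : Multigraph V E) (e : E) (x : V) : ℤ :=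
  if x = (G.ends e).out.1 then 1 else -1

lemma orient_eq_one_or_neg_one (e : E) (x : V) : G.orient e x = 1 ∨ G.orient e x = -1 := by
  unfold orient; split_ifs <;> simp

lemma orient_mul_incidence {e : E} {x y : V} (he : G.ends e = s(x, y)) (z : V) :
    G.orient e x * G.incidence e z = dipole x y z := by
  have hout : s((G.ends e).out.1, (G.ends e).out.2) = s(x, y) := (Quot.out_eq _).trans he
  unfold orient incidence dipole
  rcases Sym2.eq_iff.1 hout with ⟨h₁, h₂⟩ | ⟨h₁, h₂⟩ <;> rw [h₁, h₂] <;> 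
    split_ifs <;> simp_all

lemma orient_mul_sum_incidence {e : E} {x y : V} (he : G.ends e = s(x, y)) (R : Finset V) :
    G.orient e x * ∑ z ∈ R, G.incidence e z =
      (if x ∈ R then 1 else 0) - (if y ∈ R then 1 else 0) := by
  simp [Finset.mul_sum, orient_mul_incidence he, dipole, Finset.sum_sub_distrib]

lemma sum_incidence_eq_orient {e : E} {x y : V} {R : Finset V} (he : G.ends e = s(x, y))
    (hx : x ∈ R) (hy : y ∉ R) : ∑ z ∈ R, G.incidence e z = G.orient e x := by
  have h := orient_mul_sum_incidence he R
  rw [if_pos hx, if_neg hy] at h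
  rcases G.orient_eq_one_or_neg_one e x with ho | ho <;> rw [ho] at h ⊢ <;> linarith

lemma sum_incidence_eq_zero {e : E} {R : Finset V} (he : e ∉ G.cutEdges ↑R) :
    ∑ z ∈ R, G.incidence e z = 0 := by
  obtain ⟨⟨x, y⟩, hxy⟩ := Sym2.mk_surjective (G.ends e)
  have h := orient_mul_sum_incidence hxy.symm R
  rw [mem_cutEdges_iff hxy.symm] at he
  simp only [Finset.mem_coe] at he
  rcases G.orient_eq_one_or_neg_one e x with ho | ho <;> rw [ho] at h <;> split_ifs at h <;>
    first | linarith | tauto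

noncomputable def Walk.flow [DecidableEq E] : ∀ {u v : V}, G.Walk u v → E → ℤ
  | _, _, .nil _ => 0
  | u, _, .cons e _ p => Pi.single e (G.orient e u) + p.flow

section WalkFlow

variable [DecidableEq E] {u v : V} (p : G.Walk u v)

lemma Walk.flow_apply_of_notMem_edges {e : E} (he : e ∉ p.edges) : p.flow e = 0 := by
  induction p with
  | nil => rfl
  | cons e' he' q ih =>
    simp only [edges, List.mem_cons, not_or] at he
    simp [flow, he.1, ih he.2]

lemma Walk.flow_apply_of_mem_darts (hp : p.edges.Nodup) {e : E} {x : V}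
    (hd : (e, x) ∈ p.darts) : p.flow e = G.orient e x := by
  induction p with
  | nil => simp [darts] at hd
  | cons e' he' q ih =>
    rw [edges, List.nodup_cons] at hp
    rcases List.mem_cons.1 hd with hd | hd
    · obtain ⟨rfl, rfl⟩ := Prod.mk.inj hd
      simp [flow, q.flow_apply_of_notMem_edges hp.1]
    · have he : e ∈ q.edges := q.edges_eq_map_darts ▸ List.mem_map_of_mem (f := Prod.fst) hd
      have hne : e ≠ e' := fun h => hp.1 (h ▸ he)
      simp [flow, hne, ih hp.2 hd]

lemma Walk.sub_flow_apply {f : E → ℤ} (hp : p.IsPath)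
    (harc : ∀ d ∈ p.darts, G.orient d.1 d.2 * f d.1 = 1) (e : E) :
    (f - p.flow) e = if e ∈ p.edges then 0 else f e := by
  split_ifs with he
  · obtain ⟨⟨e, x⟩, hd, rfl⟩ := List.mem_map.1 (p.edges_eq_map_darts ▸ he)
    have harc := harc _ hd
    dsimp only at harc ⊢
    rw [Pi.sub_apply, p.flow_apply_of_mem_darts hp.edges_nodup hd]
    rcases G.orient_eq_one_or_neg_one e x with ho | ho <;> rw [ho] at harc ⊢ <;> omega
  · rw [Pi.sub_apply, p.flow_apply_of_notMem_edges he, sub_zero]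

end WalkFlow

variable [Fintype E]

noncomputable def netFlow (G : Multigraph V E) (f : E → ℤ) (z : V) : ℤ :=
  ∑ e, f e * G.incidence e z

lemma netFlow_zero (z : V) : G.netFlow 0 z = 0 := by
  simp [netFlow]

lemma netFlow_add (f g : E → ℤ) (z : V) :
    G.netFlow (f + g) z = G.netFlow f z + G.netFlow g z := by
  simp [netFlow, add_mul, Finset.sum_add_distrib]

lemma netFlow_sub (f g : E → ℤ) (z : V) :
    G.netFlow (f - g) z = G.netFlow f z - G.netFlow g z := by
  simp [netFlow, sub_mul, Finset.sum_sub_distrib]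

lemma netFlow_single [DecidableEq E] (e : E) (c : ℤ) (z : V) :
    G.netFlow (Pi.single e c) z = c * G.incidence e z := by
  simp [netFlow, Pi.single_apply]

lemma sum_netFlow (f : E → ℤ) (R : Finset V) :
    ∑ z ∈ R, G.netFlow f z = ∑ e, f e * ∑ z ∈ R, G.incidence e z := by
  simp only [netFlow, Finset.mul_sum]
  exact Finset.sum_comm

lemma Walk.netFlow_flow [DecidableEq E] {u v : V} (p : G.Walk u v) (z : V) :
    G.netFlow p.flow z = dipole u v z := by
  induction p with
  | nil => simp [flow, netFlow_zero, dipole]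
  | cons e he q ih =>
    rw [flow, netFlow_add, netFlow_single, orient_mul_incidence he, ih]
    unfold dipole
    ring

def IsFlow (G : Multigraph V E) (f : E → ℤ) (a b : V) (t : ℤ) : Prop :=
  (∀ e, |f e| ≤ 1) ∧ ∀ z, G.netFlow f z = t * dipole a b z

variable {f : E → ℤ} {a b : V} {t : ℤ}

lemma IsFlow.sum_netFlow (hf : G.IsFlow f a b t) {R : Finset V} (ha : a ∈ R) (hb : b ∉ R) :
    ∑ z ∈ R, G.netFlow f z = t := by
  simp [hf.2, ← Finset.mul_sum, sum_dipole ha hb]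

lemma IsFlow.add_walkFlow [DecidableEq E] (hf : G.IsFlow f a b t) {p : G.Walk a b}
    (hp : p.IsPath) (hres : ∀ d ∈ p.darts, G.orient d.1 d.2 * f d.1 ≤ 0) :
    G.IsFlow (f + p.flow) a b (t + 1) := by
  refine ⟨fun e => ?_, fun z => by rw [netFlow_add, hf.2, p.netFlow_flow]; ring⟩
  by_cases he : e ∈ p.edges
  · obtain ⟨⟨e, x⟩, hd, rfl⟩ := List.mem_map.1 (p.edges_eq_map_darts ▸ he)
    have hfe := abs_le.1 (hf.1 e)
    have hres := hres _ hd
    dsimp only at hres ⊢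
    rw [Pi.add_apply, p.flow_apply_of_mem_darts hp.edges_nodup hd, abs_le]
    rcases G.orient_eq_one_or_neg_one e x with ho | ho <;> rw [ho] at hres ⊢ <;> omega
  · rw [Pi.add_apply, p.flow_apply_of_notMem_edges he, add_zero]
    exact hf.1 e

lemma IsFlow.sub_walkFlow [DecidableEq E] (hf : G.IsFlow f a b (t + 1)) {p : G.Walk a b}
    (hp : p.IsPath) (harc : ∀ d ∈ p.darts, G.orient d.1 d.2 * f d.1 = 1) :
    G.IsFlow (f - p.flow) a b t := by
  refine ⟨fun e => ?_, fun z => by rw [netFlow_sub, hf.2, p.netFlow_flow]; ring⟩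
  rw [p.sub_flow_apply hp harc]
  split_ifs
  exacts [by simp, hf.1 e]

lemma sum_netFlow_eq_ncard_cutEdges (hf : ∀ e, |f e| ≤ 1) {R : Finset V}
    (hR : ∀ x y, G.DartRel (fun e x => G.orient e x * f e ≤ 0) x y → x ∈ R → y ∈ R) :
    ∑ z ∈ R, G.netFlow f z = (G.cutEdges ↑R).ncard := by
  classical
  rw [sum_netFlow, ncard_cutEdges_eq_sum]
  push_cast
  refine Finset.sum_congr rfl fun e _ => ?_
  split_ifs with hcut
  · obtain ⟨x, y, he, hx, hy⟩ := hcut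
    have hsat : ¬ G.orient e x * f e ≤ 0 := fun h => hy (hR x y ⟨e, he, h⟩ hx)
    have hfe := abs_le.1 (hf e)
    rw [sum_incidence_eq_orient he hx hy]
    rcases G.orient_eq_one_or_neg_one e x with ho | ho <;> rw [ho] at hsat ⊢ <;> omega
  · rw [sum_incidence_eq_zero hcut, mul_zero]

lemma sum_netFlow_nonpos (hf : ∀ e, |f e| ≤ 1) {R : Finset V}
    (hR : ∀ x y, G.DartRel (fun e x => G.orient e x * f e = 1) x y → x ∈ R → y ∈ R) :
    ∑ z ∈ R, G.netFlow f z ≤ 0 := by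
  classical
  rw [sum_netFlow]
  refine Finset.sum_nonpos fun e _ => ?_
  by_cases hcut : e ∈ G.cutEdges ↑R
  · obtain ⟨x, y, he, hx, hy⟩ := hcut
    have hsat : G.orient e x * f e ≠ 1 := fun h => hy (hR x y ⟨e, he, h⟩ hx)
    have hfe := abs_le.1 (hf e)
    rw [sum_incidence_eq_orient he hx hy]
    rcases G.orient_eq_one_or_neg_one e x with ho | ho <;> rw [ho] at hsat ⊢ <;> omega
  · rw [sum_incidence_eq_zero hcut, mul_zero]

theorem exists_isFlow_of_le_ncard_cutEdges [Fintype V] [DecidableEq E] {t : ℕ}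
    (hcut : ∀ B : Set V, a ∈ B → b ∉ B → t ≤ (G.cutEdges B).ncard) :
    ∃ f, G.IsFlow f a b t := by
  induction t with
  | zero => exact ⟨0, fun e => by simp, fun z => by simp [netFlow_zero]⟩
  | succ t ih =>
    obtain ⟨f, hf⟩ := ih fun B ha hb => (hcut B ha hb).trans' t.le_succ
    -- residual graph: `x → y` if some edge `xy` can still carry one more unit from `x` to `y`
    by_cases hb : Relation.ReflTransGen (G.DartRel fun e x => G.orient e x * f e ≤ 0) a b
    · obtain ⟨p, hp, hres⟩ := exists_isPath_of_reflTransGen hb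
      exact ⟨f + p.flow, by exact_mod_cast hf.add_walkFlow hp hres⟩
    · obtain ⟨R, ha, hb, hR⟩ := exists_finset_closed_of_not_reflTransGen hb
      have hval := (hf.sum_netFlow ha hb).symm.trans (sum_netFlow_eq_ncard_cutEdges hf.1 hR)
      have := hcut R ha hb
      omega

theorem exists_paths_of_isFlow [Fintype V] [DecidableEq E] (t : ℕ) {f : E → ℤ}
    (hf : G.IsFlow f a b t) :
    ∃ ps : Fin t → G.Walk a b, (∀ i, (ps i).IsPath) ∧
      (∀ i, ∀ e ∈ (ps i).edges, f e ≠ 0) ∧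
      ∀ i j, i ≠ j → ∀ e ∈ (ps i).edges, e ∉ (ps j).edges := by
  induction t generalizing f with
  | zero => exact ⟨Fin.elim0, fun i => i.elim0, fun i => i.elim0, fun i => i.elim0⟩
  | succ t ih =>
    -- follow edges carrying flow: a set closed under this has nonpositive net outflow
    have hb : Relation.ReflTransGen (G.DartRel fun e x => G.orient e x * f e = 1) a b := by
      by_contra hb
      obtain ⟨R, ha, hb, hR⟩ := exists_finset_closed_of_not_reflTransGen hb
      have := hf.sum_netFlow ha hb ▸ sum_netFlow_nonpos hf.1 hR
      omega
    obtain ⟨p, hp, harc⟩ := exists_isPath_of_reflTransGen hb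
    have hf' := (show G.IsFlow f a b ((t : ℤ) + 1) by exact_mod_cast hf).sub_walkFlow hp harc
    obtain ⟨ps, hps, hpsf, hdisj⟩ := ih hf'
    have hpsp : ∀ i, ∀ e ∈ (ps i).edges, e ∉ p.edges ∧ f e ≠ 0 := fun i e he => by
      have := hpsf i e he
      rw [p.sub_flow_apply hp harc] at this
      split_ifs at this with hep
      exacts [absurd rfl this, ⟨hep, this⟩]
    have hpf : ∀ e ∈ p.edges, f e ≠ 0 := fun e he hfe => by
      obtain ⟨⟨e, x⟩, hd, rfl⟩ := List.mem_map.1 (p.edges_eq_map_darts ▸ he)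
      simpa [hfe] using harc _ hd
    refine ⟨Fin.cons p ps, Fin.cases hp hps, Fin.cases hpf fun i e he => (hpsp i e he).2, ?_⟩
    intro i j hij e hi hj
    cases i using Fin.cases <;> cases j using Fin.cases
    · exact hij rfl
    · exact (hpsp _ e hj).1 hi
    · exact (hpsp _ e hi).1 hj
    · exact hdisj _ _ (fun h => hij (congrArg Fin.succ h)) e hi hj

end Flow

section Menger

variable [Fintype V] [Fintype E]

theorem hasEdgeDisjointPaths_iff_le_ncard_cutEdges {t : ℕ} {a b : V} :
    G.HasEdgeDisjointPaths t a b ↔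
      ∀ B : Set V, a ∈ B → b ∉ B → t ≤ (G.cutEdges B).ncard := by
  classical
  refine ⟨fun h B ha hb => le_ncard_cutEdges_of_hasEdgeDisjointPaths h ha hb, fun h => ?_⟩
  obtain ⟨f, hf⟩ := exists_isFlow_of_le_ncard_cutEdges h
  obtain ⟨ps, hps, -, hdisj⟩ := exists_paths_of_isFlow t hf
  exact ⟨ps, hps, hdisj⟩

theorem exactlyEdgeConnected_iff {k : ℕ} :
    G.ExactlyEdgeConnected k ↔ (∃ u v : V, u ≠ v) ∧
      (∀ B : Set V, B.Nonempty → Bᶜ.Nonempty → k ≤ (G.cutEdges B).ncard) ∧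
      ∀ a b : V, a ≠ b →
        ∃ B : Set V, a ∈ B ∧ b ∉ B ∧ (G.cutEdges B).ncard ≤ k := by
  simp only [ExactlyEdgeConnected, hasEdgeDisjointPaths_iff_le_ncard_cutEdges, not_forall,
    not_le, Nat.lt_succ_iff, exists_prop]
  refine and_congr_right fun _ => ⟨fun h => ⟨?_, fun a b hab => (h a b hab).2⟩, fun h => ?_⟩
  · rintro B ⟨a, ha⟩ ⟨b, hb⟩
    exact (h a b (fun hab => hb (hab ▸ ha))).1 B ha hb
  · exact fun a b hab => ⟨fun B ha hb => h.1 B ⟨a, ha⟩ ⟨b, hb⟩, h.2 a b hab⟩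

end Menger

lemma exists_cut_le_subset_or_compl_subset [Fintype E] {k : ℕ} {A B : Set V} {a b : V}
    (hk : ∀ C : Set V, C.Nonempty → Cᶜ.Nonempty → k ≤ (G.cutEdges C).ncard)
    (hA : (G.cutEdges A).ncard ≤ k) (hB : (G.cutEdges B).ncard ≤ k)
    (haB : a ∈ B) (hbB : b ∉ B) (hab : a ∈ A ∨ b ∈ A) :
    ∃ C, (C ⊆ A ∨ Aᶜ ⊆ C) ∧ a ∈ C ∧ b ∉ C ∧ (G.cutEdges C).ncard ≤ k := by
  wlog ha : a ∈ A generalizing a b B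
  · obtain ⟨C, hC, hbC, haC, hCk⟩ := this (B := Bᶜ) (by rwa [cutEdges_compl]) hbB
      (not_not.2 haB) hab.symm (hab.resolve_left ha)
    exact ⟨Cᶜ, hC.symm.imp Set.compl_subset_comm.1 Set.compl_subset_compl.2, haC,
      not_not.2 hbC, by rwa [cutEdges_compl]⟩
  by_cases hAB : Aᶜ ⊆ B
  · exact ⟨B, .inr hAB, haB, hbB, hB⟩
  obtain ⟨w, hwA, hwB⟩ := Set.not_subset.1 hAB
  have hunion : k ≤ (G.cutEdges (B ∪ A)).ncard := hk _ ⟨a, .inl haB⟩ ⟨w, by simp_all⟩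
  have := ncard_cutEdges_inter_add_ncard_cutEdges_union_le (G := G) B A
  exact ⟨B ∩ A, .inl Set.inter_subset_right, ⟨haB, ha⟩, fun h => hbB h.1, by omega⟩

lemma ncard_cutEdges_eq_of_ends_eq_map {W F : Type} {H : Multigraph W F} (φ : V → W)
    (Φ : F → E) (hΦ : Function.Injective Φ) (hends : ∀ e, H.ends e = (G.ends (Φ e)).map φ)
    (hrange : ∀ e x y, G.ends e = s(x, y) → φ x ≠ φ y → e ∈ Set.range Φ) (B : Set W) :
    (H.cutEdges B).ncard = (G.cutEdges (φ ⁻¹' B)).ncard := by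
  have hcut : H.cutEdges B = Φ ⁻¹' G.cutEdges (φ ⁻¹' B) := by
    ext e
    obtain ⟨⟨x, y⟩, hxy⟩ := Sym2.mk_surjective (G.ends (Φ e))
    have hH : H.ends e = s(φ x, φ y) := by rw [hends, ← hxy]; rfl
    rw [Set.mem_preimage, mem_cutEdges_iff hH, mem_cutEdges_iff hxy.symm]
    rfl
  rw [hcut, Set.ncard_preimage_of_injective_subset_range hΦ]
  rintro e ⟨x, y, he, hx, hy⟩
  exact hrange e x y he fun h => hy (by rw [Set.mem_preimage, ← h]; exact hx)

section Split

variable {A : Set V}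

open Classical in
noncomputable def collapse (A : Set V) (x : V) : ↥A ⊕ Unit :=
  if h : x ∈ A then Sum.inl ⟨x, h⟩ else Sum.inr ()

lemma collapse_of_notMem {x : V} (hx : x ∉ A) : collapse A x = Sum.inr () := dif_neg hx

lemma collapse_eq_collapse_iff {x y : V} :
    collapse A x = collapse A y ↔ x = y ∨ x ∉ A ∧ y ∉ A := by
  unfold collapse
  split_ifs <;> simp_all <;> rintro rfl <;> contradiction

lemma collapse_surjective (hA : Aᶜ.Nonempty) : Function.Surjective (collapse A)
  | .inl a => ⟨a, dif_pos a.2⟩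
  | .inr () => ⟨hA.some, collapse_of_notMem hA.some_mem⟩

lemma preimage_collapse_image {C : Set V} (hC : C ⊆ A ∨ Aᶜ ⊆ C) :
    collapse A ⁻¹' (collapse A '' C) = C := by
  ext x
  simp only [Set.mem_preimage, Set.mem_image, collapse_eq_collapse_iff]
  constructor
  · rintro ⟨y, hy, rfl | ⟨hyA, hxA⟩⟩
    · exact hy
    · exact hC.elim (fun h => absurd (h hy) hyA) (fun h => h hxA)
  · exact fun hx => ⟨x, hx, .inl rfl⟩

variable {k : ℕ} {u v : Fin k → V} {f : Fin k → E}

lemma splitGraph_ends (hends : ∀ i, G.ends (f i) = s(u i, v i)) (hv : ∀ i, v i ∉ A)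
    (e : {e : E // ∀ x ∈ G.ends e, x ∈ A} ⊕ Fin k) :
    (G.splitGraph A u).ends e = (G.ends (Sum.elim Subtype.val f e)).map (collapse A) := by
  rcases e with e | i
  · rfl
  · rw [Sum.elim_inr, hends, Sym2.map_mk, collapse_of_notMem (hv i)]
    rfl

lemma ncard_cutEdges_splitGraph (hinj : Function.Injective f)
    (hrange : Set.range f = G.cutEdges A) (hends : ∀ i, G.ends (f i) = s(u i, v i))
    (hv : ∀ i, v i ∉ A) (B : Set (↥A ⊕ Unit)) :
    ((G.splitGraph A u).cutEdges B).ncard = (G.cutEdges (collapse A ⁻¹' B)).ncard := by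
  refine ncard_cutEdges_eq_of_ends_eq_map _ _ ?_ (splitGraph_ends hends hv) ?_ B
  · refine Subtype.val_injective.sumElim hinj fun e i h => hv i (e.2 _ ?_)
    rw [h, hends]
    exact Sym2.mem_mk_right _ _
  · intro e x y he hxy
    by_cases hin : ∀ z ∈ G.ends e, z ∈ A
    · exact ⟨.inl ⟨e, hin⟩, rfl⟩
    · have hcut : e ∈ G.cutEdges A := by
        rw [mem_cutEdges_iff he]
        rw [Ne, collapse_eq_collapse_iff] at hxy
        simp only [he, Sym2.mem_iff, forall_eq_or_imp, forall_eq] at hin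
        tauto
      obtain ⟨i, rfl⟩ := hrange ▸ hcut
      exact ⟨.inr i, rfl⟩

theorem exactlyEdgeConnected_splitGraph [Fintype V] [Fintype E]
    (hG : G.ExactlyEdgeConnected k) (hA : A.Nonempty) (hAc : Aᶜ.Nonempty)
    (hinj : Function.Injective f) (hrange : Set.range f = G.cutEdges A)
    (hends : ∀ i, G.ends (f i) = s(u i, v i)) (hv : ∀ i, v i ∉ A) :
    (G.splitGraph A u).ExactlyEdgeConnected k := by
  classical
  obtain ⟨-, hk, hsep⟩ := exactlyEdgeConnected_iff.1 hG
  have hcut := ncard_cutEdges_splitGraph hinj hrange hends hv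
  have hsurj := collapse_surjective hAc
  have hAk : (G.cutEdges A).ncard ≤ k := by
    rw [← hrange, Set.ncard_range_of_injective hinj, Nat.card_fin]
  refine exactlyEdgeConnected_iff.2 ⟨⟨.inl ⟨_, hA.some_mem⟩, .inr (), Sum.inl_ne_inr⟩,
    fun B hB hBc => ?_, fun a₁ b₁ hab => ?_⟩
  · rw [hcut]
    exact hk _ (hB.preimage hsurj) (hBc.preimage hsurj)
  · obtain ⟨a, rfl⟩ := hsurj a₁
    obtain ⟨b, rfl⟩ := hsurj b₁
    obtain ⟨B, haB, hbB, hBk⟩ := hsep a b fun h => hab (h ▸ rfl)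
    have haA : a ∈ A ∨ b ∈ A := by
      by_contra h
      exact hab (collapse_eq_collapse_iff.2 (.inr (not_or.1 h)))
    obtain ⟨C, hC, haC, hbC, hCk⟩ := exists_cut_le_subset_or_compl_subset hk hAk hBk haB hbB haA
    refine ⟨collapse A '' C, ⟨a, haC, rfl⟩, fun hb => hbC ?_, ?_⟩
    · rwa [← preimage_collapse_image hC]
    · rwa [hcut, preimage_collapse_image hC]

end Split

end Multigraph

theorem splitGraph_exactlyEdgeConnected_general {V E : Type} [Fintype V] [Fintype E]
    (G : Multigraph V E) (k : ℕ) (hG : G.ExactlyEdgeConnected k) (A : Set V)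
    (hA₁ : ∃ x ∈ A, ∃ y ∈ A, x ≠ y) (hA₂ : ∃ x ∈ Aᶜ, ∃ y ∈ Aᶜ, x ≠ y)
    (u v : Fin k → V) (f : Fin k → E)
    (hinj : Function.Injective f) (hrange : Set.range f = G.cutEdges A)
    (hends : ∀ i, G.ends (f i) = s(u i, v i))
    (hu : ∀ i, u i ∈ A) (hv : ∀ i, v i ∉ A) :
    (G.splitGraph A u).ExactlyEdgeConnected k ∧
      (G.splitGraph Aᶜ v).ExactlyEdgeConnected k := by
  obtain ⟨x, hx, -⟩ := hA₁
  obtain ⟨y, hy, -⟩ := hA₂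
  have hrange' : Set.range f = G.cutEdges Aᶜ := by rw [Multigraph.cutEdges_compl, hrange]
  refine ⟨?_, ?_⟩
  · exact Multigraph.exactlyEdgeConnected_splitGraph hG ⟨x, hx⟩ ⟨y, hy⟩ hinj hrange
      hends hv
  · exact Multigraph.exactlyEdgeConnected_splitGraph hG ⟨y, hy⟩ ⟨x, not_not.2 hx⟩ hinj
      hrange' (fun i => (hends i).trans Sym2.eq_swap) (fun i => not_not.2 (hu i))

/-- Let `G` be exactly `k`-edge-connected and let
`S = ⟨A, Aᶜ⟩` be a non-trivial minimum edge cut, with cut edges enumerated as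
`f i` having endpoints `u i ∈ A` and `v i ∉ A`.  Then the two multigraphs
`G₁` and `G₂` obtained by vertex splitting `G` with respect to `S` are both
exactly `k`-edge-connected. -/
theorem splitGraph_exactlyEdgeConnected {V E : Type} [Fintype V] [Fintype E]
    (G : Multigraph V E) (k : ℕ) (hG : G.ExactlyEdgeConnected k) (A : Set V)
    (hA₁ : ∃ x ∈ A, ∃ y ∈ A, x ≠ y) (hA₂ : ∃ x ∈ Aᶜ, ∃ y ∈ Aᶜ, x ≠ y)
    (hmin : ∀ B : Set V, B.Nonempty → Bᶜ.Nonempty →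
      (G.cutEdges A).ncard ≤ (G.cutEdges B).ncard)
    (u v : Fin k → V) (f : Fin k → E)
    (hinj : Function.Injective f) (hrange : Set.range f = G.cutEdges A)
    (hends : ∀ i, G.ends (f i) = s(u i, v i))
    (hu : ∀ i, u i ∈ A) (hv : ∀ i, v i ∉ A) :
    (G.splitGraph A u).ExactlyEdgeConnected k ∧
      (G.splitGraph Aᶜ v).ExactlyEdgeConnected k :=
  splitGraph_exactlyEdgeConnected_general G k hG A hA₁ hA₂ u v f hinj hrange hends hu hv
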